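/- arXiv:2202.10986 — 4 statements merged into one kernel-verified Lean document; each statement's English description precedes it below -/
import Mathlib

section
/- Fix n ≥ 1, a budget M ≥ 0, external assets e_i ≥ 0 and liabilities l_{ij} ≥ 0 with l_{ii} = 0, and let L_i = Σ_j l_{ij}. Consider the compact feasible set of pairs (x, p) with x ∈ ℝ^n, p ∈ ℝ^{n×n} satisfying: x_i ≥ 0, p_{ij} ≥ 0, Σ_i x_i ≤ M, p_{ij} ≤ l_{ij}, and p_{ij} ≤ (x_i + e_i + Σ_k p_{ki})·l_{ij}/L_i whenever L_i > 0. Then every maximizer (x*, p*) of the total liquidity Σ_{i,j} p_{ij} over this set satisfies, for every bank i with L_i > 0: if x*_i + e_i + Σ_j p*_{ji} ≥ L_i then p*_{ij} = l_{ij} for all j, and otherwise p*_{ij} = (x*_i + e_i + Σ_k p*_{ki})·l_{ij}/L_i for all j. In particular, p* is a proportional clearing payment matrix (with α = β = 1) for the network with external assets e + x*, i.e., it satisfies absolute priority, limited liability, and proportionality. -/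
open Finset

/-- `p` is a proportional clearing payment matrix for the network with external assets `e`,
liabilities `l` and default costs `α, β`. -/
def IsClearing {ι : Type*} [Fintype ι] (α β : ℝ) (e : ι → ℝ) (l : ι → ι → ℝ)
    (p : ι → ι → ℝ) : Prop :=
  (∀ i j, 0 ≤ p i j) ∧ (∀ i j, p i j ≤ l i j) ∧
  (∀ i, (∑ j, l i j) ≤ e i + (∑ j, p j i) → ∀ j, p i j = l i j) ∧
  (∀ i, e i + (∑ j, p j i) < (∑ j, l i j) →
    ∀ j, p i j = (α * e i + β * (∑ k, p k i)) * l i j / (∑ k, l i k))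

/-- Every maximizer of the LP used for computing the optimal cash injection policy
(without default costs) satisfies absolute priority, limited liability and proportionality,
i.e. it is a proportional clearing payment matrix (with `α = β = 1`) for the network with
external assets `e + x*`. -/
theorem lp_maximizer_is_clearing (n : ℕ) (hn : 1 ≤ n) (M : ℝ) (hM : 0 ≤ M)
    (e : Fin n → ℝ) (he : ∀ i, 0 ≤ e i)
    (l : Fin n → Fin n → ℝ) (hl : ∀ i j, 0 ≤ l i j) (hdiag : ∀ i, l i i = 0)
    (Feasible : (Fin n → ℝ) → (Fin n → Fin n → ℝ) → Prop)
    (hFeas : ∀ x p, Feasible x p ↔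
      (∀ i, 0 ≤ x i) ∧ (∀ i j, 0 ≤ p i j) ∧ ((∑ i, x i) ≤ M) ∧
      (∀ i j, p i j ≤ l i j) ∧
      (∀ i j, 0 < (∑ k, l i k) →
        p i j ≤ (x i + e i + (∑ k, p k i)) * l i j / (∑ k, l i k)))
    (x : Fin n → ℝ) (p : Fin n → Fin n → ℝ)
    (hfeas : Feasible x p)
    (hopt : ∀ x' p', Feasible x' p' → (∑ i, ∑ j, p' i j) ≤ (∑ i, ∑ j, p i j)) :
    (∀ i, 0 < (∑ k, l i k) →
      (((∑ k, l i k) ≤ x i + e i + (∑ j, p j i) → ∀ j, p i j = l i j) ∧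
       (x i + e i + (∑ j, p j i) < (∑ k, l i k) →
         ∀ j, p i j = (x i + e i + (∑ k, p k i)) * l i j / (∑ k, l i k))))
    ∧ IsClearing 1 1 (fun i => e i + x i) l p := by
  have hfeas' := hfeas
  rw [hFeas] at hfeas'
  obtain ⟨hx, hp0, hxM, hpl, hcap⟩ := hfeas'
  -- key claim: at the optimum there is no slack in the binding constraints
  have key : ∀ i j, 0 < (∑ k, l i k) →
      min (l i j) ((x i + e i + ∑ k, p k i) * l i j / (∑ k, l i k)) ≤ p i j := by
    intro i j hLi
    by_contra hlt
    push_neg at hlt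
    set c := min (l i j) ((x i + e i + ∑ k, p k i) * l i j / (∑ k, l i k)) with hc
    have hij : i ≠ j := by
      rintro rfl
      have h0 : c ≤ 0 := by
        rw [hc]
        simp [hdiag i]
      linarith [hp0 i i, h0, hlt]
    set q : Fin n → Fin n → ℝ := fun k m => if k = i ∧ m = j then c else p k m with hq
    have hqge : ∀ k m, p k m ≤ q k m := by
      intro k m
      simp only [hq]
      split
      · next h => rcases h with ⟨rfl, rfl⟩; exact le_of_lt hlt
      · exact le_refl _
    have hqcoli : (∑ k, q k i) = ∑ k, p k i := by
      refine Finset.sum_congr rfl fun k _ => ?_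
      simp only [hq]
      split
      · next h => exact absurd h.2 hij
      · rfl
    have hfe' : Feasible x q := by
      rw [hFeas]
      refine ⟨hx, fun k m => le_trans (hp0 k m) (hqge k m), hxM, ?_, ?_⟩
      · intro k m
        simp only [hq]
        split
        · next h => rcases h with ⟨rfl, rfl⟩; exact min_le_left _ _
        · exact hpl k m
      · intro b m hLb
        have hcol : (∑ k, p k b) ≤ ∑ k, q k b := Finset.sum_le_sum fun k _ => hqge k b
        have hrhs : (x b + e b + ∑ k, p k b) * l b m / (∑ k, l b k)
            ≤ (x b + e b + ∑ k, q k b) * l b m / (∑ k, l b k) := by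
          gcongr
          exact hl b m
        by_cases hbm : b = i ∧ m = j
        · rcases hbm with ⟨rfl, rfl⟩
          have : q b m = c := by simp [hq]
          rw [this, hqcoli]
          exact min_le_right _ _
        · have : q b m = p b m := by simp only [hq]; rw [if_neg hbm]
          rw [this]
          exact le_trans (hcap b m hLb) hrhs
    have hlt' : (∑ k, ∑ m, p k m) < ∑ k, ∑ m, q k m := by
      refine Finset.sum_lt_sum (fun k _ => Finset.sum_le_sum fun m _ => hqge k m)
        ⟨i, Finset.mem_univ i, ?_⟩
      refine Finset.sum_lt_sum (fun m _ => hqge i m) ⟨j, Finset.mem_univ j, ?_⟩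
      simpa [hq] using hlt
    exact absurd (hopt x q hfe') (not_le.2 hlt')
  -- derive the two clauses
  have main : ∀ i, 0 < (∑ k, l i k) →
      (((∑ k, l i k) ≤ x i + e i + (∑ j, p j i) → ∀ j, p i j = l i j) ∧
       (x i + e i + (∑ j, p j i) < (∑ k, l i k) →
         ∀ j, p i j = (x i + e i + (∑ k, p k i)) * l i j / (∑ k, l i k))) := by
    intro i hLi
    constructor
    · intro hsolv j
      have hmin : min (l i j) ((x i + e i + ∑ k, p k i) * l i j / (∑ k, l i k)) = l i j := by
        rw [min_eq_left_iff]
        rw [le_div_iff₀ hLi]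
        have := mul_le_mul_of_nonneg_left hsolv (hl i j)
        nlinarith [hl i j]
      have := key i j hLi
      rw [hmin] at this
      exact le_antisymm (hpl i j) this
    · intro hdef j
      have hmin : min (l i j) ((x i + e i + ∑ k, p k i) * l i j / (∑ k, l i k))
          = (x i + e i + ∑ k, p k i) * l i j / (∑ k, l i k) := by
        rw [min_eq_right_iff, div_le_iff₀ hLi]
        nlinarith [hl i j, le_of_lt hdef]
      have h1 := key i j hLi
      rw [hmin] at h1
      exact le_antisymm (hcap i j hLi) h1
  refine ⟨main, hp0, hpl, ?_, ?_⟩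
  · -- absolute priority / limited liability
    intro i hsolv j
    have hs : (∑ k, l i k) ≤ e i + x i + ∑ j, p j i := hsolv
    by_cases hLi : 0 < (∑ k, l i k)
    · exact (main i hLi).1 (by linarith [hs]) j
    · -- all liabilities are zero
      have hLz : (∑ k, l i k) = 0 :=
        le_antisymm (not_lt.1 hLi) (Finset.sum_nonneg fun k _ => hl i k)
      have hlz : l i j = 0 := by
        have := (Finset.sum_eq_zero_iff_of_nonneg (fun k _ => hl i k)).1 hLz j
          (Finset.mem_univ j)
        exact this
      exact le_antisymm (hlz ▸ hpl i j) (hlz ▸ hp0 i j)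
  · -- proportionality in default
    intro i hdef j
    have hd : e i + x i + (∑ j, p j i) < ∑ k, l i k := hdef
    have hLi : 0 < (∑ k, l i k) := by
      have hin : 0 ≤ ∑ k, p k i := Finset.sum_nonneg fun k _ => hp0 k i
      have h1 := he i
      have h2 := hx i
      linarith [hd]
    have := (main i hLi).2 (by linarith [hd]) j
    rw [this]
    ring_nf
end

section
/- Let μ > 1 and t_1 > 0 be real numbers, and let M be a real number satisfying t_1 ≤ M ≤ t_1·μ/(μ − 1). Then (t_1·μ + (M − t_1)) / (M·μ) ≥ 3/4. -/
/-- The algebraic core of the tightness part of the 3/4 approximation-ratio bound for the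
greedy cash-injection policy: `μ` is the maximum threat index, `t₁` the first greedy
transfer, `M` the total budget. -/
theorem greedy_ratio_core (μ t₁ M : ℝ) (hμ : 1 < μ) (ht₁ : 0 < t₁)
    (hM₁ : t₁ ≤ M) (hM₂ : M ≤ t₁ * μ / (μ - 1)) :
    (t₁ * μ + (M - t₁)) / (M * μ) ≥ 3 / 4 := by
  have hμ1 : (0:ℝ) < μ - 1 := by linarith
  have hM : 0 < M := lt_of_lt_of_le ht₁ hM₁
  have hM₂' : M * (μ - 1) ≤ t₁ * μ := by
    rw [div_eq_mul_inv] at hM₂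
    calc M * (μ - 1) ≤ (t₁ * μ * (μ-1)⁻¹) * (μ - 1) := by
          exact mul_le_mul_of_nonneg_right hM₂ hμ1.le
      _ = t₁ * μ := by field_simp
  rw [ge_iff_le, div_le_div_iff₀ (by norm_num) (by positivity)]
  rcases le_or_gt (3*μ - 4) 0 with h | h
  · nlinarith [mul_nonpos_of_nonneg_of_nonpos hM.le h, mul_pos ht₁ hμ1]
  · nlinarith [mul_le_mul_of_nonneg_right hM₂' h.le, mul_nonneg ht₁.le (sq_nonneg (μ-2))]
end

section
/- Let α ∈ [0,1) and β ∈ [0,1], and let x_1,…,x_k be positive integers with Σ = Σ_i x_i. Consider the financial network with banks v_1,…,v_k, S, T, L; external assets e_{v_i} = x_i and all other external assets 0; liabilities l_{v_i,S} = 4x_i/3 and l_{v_i,T} = 2x_i/3 for each i, l_{S,L} = (2+α)·Σ/3, and all other liabilities 0; default costs α, β. Then there exists a cash injection t ≥ 0 with total Σ_b t_b ≤ Σ/2 under which the maximal clearing payments have systemic liquidity at least (5α+10)·Σ/6 if and only if there exists a subset B ⊆ {1,…,k} with Σ_{i∈B} x_i = Σ/2. -/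
open Finset

/-- `p` is the maximal clearing payment matrix. -/
def IsMaxClearing {ι : Type*} [Fintype ι] (α β : ℝ) (e : ι → ℝ) (l p : ι → ι → ℝ) : Prop :=
  IsClearing α β e l p ∧ ∀ q, IsClearing α β e l q → ∀ i j, q i j ≤ p i j

/-- Systemic liquidity: the sum of all payments. -/
def liquidity {ι : Type*} [Fintype ι] (p : ι → ι → ℝ) : ℝ := ∑ i, ∑ j, p i j

/-- Banks of the Partition reduction: `Sum.inl i` is bank vᵢ, `Sum.inr 0` is S,
`Sum.inr 1` is T and `Sum.inr 2` is L. -/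
abbrev Bank (k : ℕ) := Fin k ⊕ Fin 3

set_option maxHeartbeats 1600000

/-- Correctness of the reduction from Partition showing NP-hardness of computing the
optimal cash injection policy with default costs `α < 1`: a cash injection with budget
`Σ/2` can achieve systemic liquidity at least `(5α+10)·Σ/6` iff the x's can be split
into two halves of equal sum. -/
theorem partition_reduction_optimal_injection
    (α β : ℝ) (hα₀ : 0 ≤ α) (hα₁ : α < 1) (hβ₀ : 0 ≤ β) (hβ₁ : β ≤ 1)
    (k : ℕ) (hk : 1 ≤ k) (x : Fin k → ℕ) (hx : ∀ i, 0 < x i)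
    (S : ℝ) (hS : S = ∑ i, (x i : ℝ))
    (e : Bank k → ℝ)
    (he : e = fun b => match b with
      | Sum.inl i => (x i : ℝ)
      | Sum.inr _ => 0)
    (l : Bank k → Bank k → ℝ)
    (hl : l = fun a b => match a, b with
      | Sum.inl i, Sum.inr j =>
          if j = 0 then 4 * (x i : ℝ) / 3 else if j = 1 then 2 * (x i : ℝ) / 3 else 0
      | Sum.inr j, Sum.inr j' => if j = 0 ∧ j' = 2 then (2 + α) * S / 3 else 0
      | _, _ => 0) :
    (∃ t : Bank k → ℝ, (∀ b, 0 ≤ t b) ∧ (∑ b, t b) ≤ S / 2 ∧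
        ∃ p, IsMaxClearing α β (fun b => e b + t b) l p ∧
          (5 * α + 10) * S / 6 ≤ liquidity p)
    ↔ (∃ B : Finset (Fin k), (∑ i ∈ B, (x i : ℝ)) = S / 2) := by
  have hS0 : 0 < S := by
    rw [hS]
    have : Nonempty (Fin k) := Fin.pos_iff_nonempty.mp hk
    exact Finset.sum_pos (fun i _ => by exact_mod_cast hx i) Finset.univ_nonempty
  have l_nonneg : ∀ a b, 0 ≤ l a b := by
    intro a b
    rcases a with i | j <;> rcases b with i' | j' <;> simp [hl] <;> split_ifs <;> positivity
  have l_col_v : ∀ b i, l b (Sum.inl i) = 0 := by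
    intro b i; rcases b with j | j <;> simp [hl]
  have sum_l_v : ∀ i, ∑ b, l (Sum.inl i) b = 2 * (x i : ℝ) := by
    intro i
    rw [hl]
    simp [Fintype.sum_sum_type, Fin.sum_univ_three]
    ring
  have sum_l_S : ∑ b, l (Sum.inr 0) b = (2 + α) * S / 3 := by
    rw [hl]
    simp [Fintype.sum_sum_type, Fin.sum_univ_three]
  have sum_l_T : ∑ b, l (Sum.inr 1) b = 0 := by
    rw [hl]; simp [Fintype.sum_sum_type, Fin.sum_univ_three]
  have sum_l_L : ∑ b, l (Sum.inr 2) b = 0 := by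
    rw [hl]; simp [Fintype.sum_sum_type, Fin.sum_univ_three]
  have lvS : ∀ i, l (Sum.inl i) (Sum.inr 0) = 4 * (x i : ℝ) / 3 := by
    intro i; simp [hl]
  -- converse direction
  have conv : (∃ t : Bank k → ℝ, (∀ b, 0 ≤ t b) ∧ (∑ b, t b) ≤ S / 2 ∧
        ∃ p, IsClearing α β (fun b => e b + t b) l p ∧
          (5 * α + 10) * S / 6 ≤ liquidity p) →
      ∃ B : Finset (Fin k), (∑ i ∈ B, (x i : ℝ)) = S / 2 := by
    rintro ⟨t, ht0, htb, p, ⟨hp0, hpl, hsolv, hdef⟩, hliq⟩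
    simp only at hsolv hdef
    have heV : ∀ i, e (Sum.inl i) = (x i : ℝ) := by simp [he]
    have heR : ∀ j, e (Sum.inr j) = 0 := by simp [he]
    have col_v : ∀ i, ∑ b, p b (Sum.inl i) = 0 := by
      intro i
      exact Finset.sum_eq_zero fun b _ =>
        le_antisymm ((hpl b _).trans_eq (l_col_v b i)) (hp0 b _)
    have hx0 : ∀ i, (0:ℝ) < (x i : ℝ) := fun i => by exact_mod_cast hx i
    have hsolvV : ∀ i : Fin k, (x i : ℝ) ≤ t (Sum.inl i) →
        ∀ b, p (Sum.inl i) b = l (Sum.inl i) b := by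
      intro i h b
      refine hsolv (Sum.inl i) ?_ b
      simp only [heV, col_v, sum_l_v]
      linarith
    have hdefV : ∀ i : Fin k, t (Sum.inl i) < (x i : ℝ) →
        ∀ b, p (Sum.inl i) b =
          α * ((x i : ℝ) + t (Sum.inl i)) * l (Sum.inl i) b / (2 * (x i : ℝ)) := by
      intro i h b
      have hd := hdef (Sum.inl i) (by simp only [heV, col_v, sum_l_v]; linarith [hx0 i]) b
      simp only [heV, col_v, sum_l_v, mul_zero, add_zero] at hd
      exact hd
    -- outflow of bank v i
    have out_v : ∀ i, (∑ b, p (Sum.inl i) b) =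
        if (x i : ℝ) ≤ t (Sum.inl i) then 2 * (x i : ℝ)
        else α * ((x i : ℝ) + t (Sum.inl i)) := by
      intro i
      split_ifs with h
      · rw [Finset.sum_congr rfl fun b _ => hsolvV i h b, sum_l_v]
      · push_neg at h
        rw [Finset.sum_congr rfl fun b _ => hdefV i h b, ← Finset.sum_div, ← Finset.mul_sum,
          sum_l_v]
        have := (hx0 i).ne'
        field_simp
    -- payment from v i to S is 2/3 of its outflow
    have pvS : ∀ i, 3 * p (Sum.inl i) (Sum.inr 0) = 2 * ∑ b, p (Sum.inl i) b := by
      intro i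
      rw [out_v i]
      split_ifs with h
      · rw [hsolvV i h, lvS]; ring
      · push_neg at h
        rw [hdefV i h, lvS]
        have := (hx0 i).ne'
        field_simp
        ring
    -- incoming to S
    have l_rr0 : ∀ j : Fin 3, l (Sum.inr j) (Sum.inr 0) = 0 := by
      intro j; simp [hl]
    have in_S : ∑ b, p b (Sum.inr 0) = ∑ i, p (Sum.inl i) (Sum.inr 0) := by
      rw [Fintype.sum_sum_type]
      have : ∑ j : Fin 3, p (Sum.inr j) (Sum.inr 0) = 0 :=
        Finset.sum_eq_zero fun j _ =>
          le_antisymm ((hpl _ _).trans_eq (l_rr0 j)) (hp0 _ _)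
      rw [this, add_zero]
    have in_S_out : 3 * (∑ b, p b (Sum.inr 0)) = 2 * ∑ i, ∑ b, p (Sum.inl i) b := by
      rw [in_S, Finset.mul_sum, Finset.mul_sum]
      exact Finset.sum_congr rfl fun i _ => pvS i
    -- outflow of S is at most its resources
    have hin0 : (0:ℝ) ≤ ∑ b, p b (Sum.inr 0) := Finset.sum_nonneg fun b _ => hp0 b _
    have out_S_le : ∑ b, p (Sum.inr 0) b ≤ t (Sum.inr 0) + ∑ b, p b (Sum.inr 0) := by
      rcases le_or_gt (∑ b, l (Sum.inr 0) b) (e (Sum.inr 0) + t (Sum.inr 0) + ∑ b, p b (Sum.inr 0)) with hc | hc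
      · rw [Finset.sum_congr rfl fun b _ => hsolv (Sum.inr 0) (by linarith) b]
        rw [heR, zero_add] at hc
        exact hc
      · have hd := hdef (Sum.inr 0) (by linarith)
        rw [Finset.sum_congr rfl fun b _ => hd b, ← Finset.sum_div, ← Finset.mul_sum, sum_l_S]
        have hL : (2+α)*S/3 ≠ 0 := by positivity
        rw [mul_div_assoc, div_self hL, mul_one, heR, zero_add]
        nlinarith [mul_nonneg (sub_nonneg.2 hα₁.le) (ht0 (Sum.inr 0)), mul_nonneg (sub_nonneg.2 hβ₁) hin0]
    -- rows T and L are zero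
    have l_row_T : ∀ b, l (Sum.inr 1) b = 0 := by
      intro b; rcases b with i | j <;> simp [hl]
    have l_row_L : ∀ b, l (Sum.inr 2) b = 0 := by
      intro b; rcases b with i | j <;> simp [hl]
    have out_T : ∑ b, p (Sum.inr 1) b = 0 :=
      Finset.sum_eq_zero fun b _ => le_antisymm ((hpl _ _).trans_eq (l_row_T b)) (hp0 _ _)
    have out_L : ∑ b, p (Sum.inr 2) b = 0 :=
      Finset.sum_eq_zero fun b _ => le_antisymm ((hpl _ _).trans_eq (l_row_L b)) (hp0 _ _)
    have hliq_eq : liquidity p = (∑ i, ∑ b, p (Sum.inl i) b) + ∑ b, p (Sum.inr 0) b := by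
      rw [liquidity, Fintype.sum_sum_type, Fin.sum_univ_three, out_T, out_L]
      ring
    -- the solvent set
    classical
    set A : Finset (Fin k) := univ.filter (fun i => (x i:ℝ) ≤ t (Sum.inl i)) with hA
    refine ⟨A, ?_⟩
    have hsplit : (∑ i, ∑ b, p (Sum.inl i) b) =
        (∑ i ∈ A, 2*(x i:ℝ)) +
        ∑ i ∈ univ.filter (fun i => ¬ ((x i:ℝ) ≤ t (Sum.inl i))), α * ((x i:ℝ) + t (Sum.inl i)) := by
      rw [Finset.sum_congr rfl fun i (_ : i ∈ univ) => out_v i, Finset.sum_ite]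
    have hxsum : (∑ i ∈ A, (x i:ℝ)) +
        (∑ i ∈ univ.filter (fun i => ¬ ((x i:ℝ) ≤ t (Sum.inl i))), (x i:ℝ)) = S := by
      rw [hA, Finset.sum_filter_add_sum_filter_not, hS]
    have htsum : (∑ i ∈ A, t (Sum.inl i)) +
        (∑ i ∈ univ.filter (fun i => ¬ ((x i:ℝ) ≤ t (Sum.inl i))), t (Sum.inl i)) +
        t (Sum.inr 0) ≤ S / 2 := by
      have h1 : ∑ b, t b = (∑ i, t (Sum.inl i)) + ∑ j : Fin 3, t (Sum.inr j) :=
        Fintype.sum_sum_type _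
      have h2 : (∑ i, t (Sum.inl i)) = (∑ i ∈ A, t (Sum.inl i)) +
          ∑ i ∈ univ.filter (fun i => ¬ ((x i:ℝ) ≤ t (Sum.inl i))), t (Sum.inl i) := by
        rw [hA, Finset.sum_filter_add_sum_filter_not]
      have h3 : t (Sum.inr 0) ≤ ∑ j : Fin 3, t (Sum.inr j) := by
        rw [Fin.sum_univ_three]
        have := ht0 (Sum.inr 1); have := ht0 (Sum.inr 2)
        linarith
      linarith [htb, h1 ▸ htb]
    have haA : (∑ i ∈ A, (x i:ℝ)) ≤ ∑ i ∈ A, t (Sum.inl i) := by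
      refine Finset.sum_le_sum fun i hi => ?_
      rw [hA, Finset.mem_filter] at hi
      exact hi.2
    -- abbreviations
    set a := ∑ i ∈ A, (x i:ℝ) with ha
    set w := ∑ i ∈ univ.filter (fun i => ¬ ((x i:ℝ) ≤ t (Sum.inl i))), (x i:ℝ) with hw
    set u := ∑ i ∈ univ.filter (fun i => ¬ ((x i:ℝ) ≤ t (Sum.inl i))), t (Sum.inl i) with hu
    have hO : (∑ i, ∑ b, p (Sum.inl i) b) = 2*a + α*(w + u) := by
      rw [hsplit, ← Finset.mul_sum, ha]
      rw [hw, hu, ← Finset.sum_add_distrib, ← Finset.mul_sum]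
    have hu0 : 0 ≤ u := Finset.sum_nonneg fun i _ => ht0 _
    have hw0 : 0 ≤ w := Finset.sum_nonneg fun i _ => (hx0 i).le
    have ha0 : 0 ≤ a := Finset.sum_nonneg fun i _ => (hx0 i).le
    have htS0 : 0 ≤ t (Sum.inr 0) := ht0 _
    -- final arithmetic
    rw [hliq_eq, hO] at hliq
    rw [hO] at in_S_out
    have hF : (5*α+10)*S/6 ≤ (2*a + α*(w+u)) + (t (Sum.inr 0) + ∑ b, p b (Sum.inr 0)) := by
      linarith [out_S_le]
    have hge : S/2 ≤ a := by
      nlinarith [mul_nonneg (sub_nonneg.2 hα₁.le) hu0, mul_nonneg hα₀ hu0,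
        mul_nonneg hα₀ hw0]
    linarith [haA, htsum, hge]
  -- forward direction
  have fwd : ∀ B : Finset (Fin k), (∑ i ∈ B, (x i : ℝ)) = S / 2 →
      ∃ t : Bank k → ℝ, (∀ b, 0 ≤ t b) ∧ (∑ b, t b) ≤ S / 2 ∧
        ∃ p, IsMaxClearing α β (fun b => e b + t b) l p ∧
          (5 * α + 10) * S / 6 ≤ liquidity p := by
    classical
    intro B hB
    have hx0 : ∀ i, (0:ℝ) < (x i : ℝ) := fun i => by exact_mod_cast hx i
    have hB' : (∑ i ∈ Bᶜ, (x i : ℝ)) = S / 2 := by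
      have h := Finset.sum_add_sum_compl B (fun i => (x i:ℝ))
      rw [hB, ← hS] at h
      linarith
    set c : Fin k → ℝ := fun i => if i ∈ B then 1 else α/2 with hc
    have hc0 : ∀ i, 0 ≤ c i := by
      intro i; rw [hc]; dsimp only; split_ifs <;> linarith
    have hc1 : ∀ i, c i ≤ 1 := by
      intro i; rw [hc]; dsimp only; split_ifs <;> linarith
    set t : Bank k → ℝ := fun b => match b with
      | Sum.inl i => if i ∈ B then (x i : ℝ) else 0
      | Sum.inr _ => 0 with ht
    set p : Bank k → Bank k → ℝ := fun a b => Sum.elim c (fun _ => 1) a * l a b with hp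
    have ht0 : ∀ b, 0 ≤ t b := by
      intro b; rw [ht]; rcases b with i | j
      · dsimp only; split_ifs with h
        · exact (hx0 i).le
        · exact le_refl 0
      · exact le_refl 0
    have htsum : (∑ b, t b) = S / 2 := by
      rw [ht, Fintype.sum_sum_type]
      simp [Finset.sum_ite_mem, hB]
    -- values of e + t
    have hetV : ∀ i, e (Sum.inl i) + t (Sum.inl i) = if i ∈ B then 2*(x i:ℝ) else (x i:ℝ) := by
      intro i; simp only [he, ht]; split_ifs <;> ring
    have hetR : ∀ j, e (Sum.inr j) + t (Sum.inr j) = 0 := by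
      intro j; simp [he, ht]
    -- p column into v is zero, rows of p
    have pval_v : ∀ i b, p (Sum.inl i) b = c i * l (Sum.inl i) b := by
      intro i b; rw [hp]; simp
    have pval_r : ∀ (j : Fin 3) b, p (Sum.inr j) b = l (Sum.inr j) b := by
      intro j b; rw [hp]; simp
    have col_v : ∀ i, ∑ b, p b (Sum.inl i) = 0 := by
      intro i
      refine Finset.sum_eq_zero fun b _ => ?_
      rcases b with i' | j
      · rw [pval_v, l_col_v, mul_zero]
      · rw [pval_r, l_col_v]
    have csum : ∀ f : Fin k → ℝ, (∑ i, c i * f i) =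
        (∑ i ∈ B, f i) + (α/2) * ∑ i ∈ Bᶜ, f i := by
      intro f
      have e1 : ∑ i ∈ B, c i * f i = ∑ i ∈ B, f i :=
        Finset.sum_congr rfl fun i hi => by
          simp only [hc]; rw [if_pos hi, one_mul]
      have e2 : ∑ i ∈ Bᶜ, c i * f i = ∑ i ∈ Bᶜ, α/2 * f i :=
        Finset.sum_congr rfl fun i hi => by
          rw [Finset.mem_compl] at hi
          simp only [hc]; rw [if_neg hi]
      rw [← Finset.sum_add_sum_compl B (fun i => c i * f i), e1, e2, Finset.mul_sum]
    have in_S : ∑ b, p b (Sum.inr 0) = (2+α)*S/3 := by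
      rw [Fintype.sum_sum_type]
      have h2 : ∑ j : Fin 3, p (Sum.inr j) (Sum.inr 0) = 0 := by
        refine Finset.sum_eq_zero fun j _ => ?_
        rw [pval_r]; simp [hl]
      have h1 : ∑ i, p (Sum.inl i) (Sum.inr 0) = (2+α)*S/3 := by
        have : ∀ i, p (Sum.inl i) (Sum.inr 0) = c i * (4*(x i:ℝ)/3) := by
          intro i; rw [pval_v, lvS]
        rw [Finset.sum_congr rfl fun i _ => this i, csum, ← Finset.sum_div, ← Finset.mul_sum,
          ← Finset.sum_div, ← Finset.mul_sum, hB, hB']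
        ring
      rw [h1, h2, add_zero]
    have hclear : IsClearing α β (fun b => e b + t b) l p := by
      refine ⟨?_, ?_, ?_, ?_⟩
      · intro a b
        rcases a with i | j
        · rw [pval_v]; exact mul_nonneg (hc0 i) (l_nonneg _ _)
        · rw [pval_r]; exact l_nonneg _ _
      · intro a b
        rcases a with i | j
        · rw [pval_v]
          exact mul_le_of_le_one_left (l_nonneg _ _) (hc1 i)
        · rw [pval_r]
      · intro a hcond b
        rcases a with i | j
        · simp only [hetV, col_v, sum_l_v, add_zero] at hcond
          rw [pval_v, hc]; dsimp only
          split_ifs with h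
          · rw [one_mul]
          · rw [if_neg h] at hcond
            nlinarith [hx0 i]
        · rw [pval_r]
      · intro a hcond b
        rcases a with i | j
        · simp only [hetV, col_v, sum_l_v, add_zero] at hcond
          simp only [hetV, col_v, sum_l_v, mul_zero, add_zero]
          rw [pval_v, hc]; dsimp only
          split_ifs with h
          · rw [if_pos h] at hcond; nlinarith [hx0 i]
          · rw [if_neg h] at hcond
            have := (hx0 i).ne'
            field_simp
        · exfalso
          have hnn : 0 ≤ ∑ b', p b' (Sum.inr j) :=
            Finset.sum_nonneg fun b' _ => by
              rcases b' with i' | j'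
              · rw [pval_v]; exact mul_nonneg (hc0 i') (l_nonneg _ _)
              · rw [pval_r]; exact l_nonneg _ _
          simp only [hetR, zero_add] at hcond
          rcases (by decide : ∀ j : Fin 3, j = 0 ∨ j = 1 ∨ j = 2) j with h0 | h0 | h0 <;>
            subst h0
          · rw [in_S, sum_l_S] at hcond; exact lt_irrefl _ hcond
          · rw [sum_l_T] at hcond; exact absurd hcond (not_lt.2 hnn)
          · rw [sum_l_L] at hcond; exact absurd hcond (not_lt.2 hnn)
    have hmax : ∀ q, IsClearing α β (fun b => e b + t b) l q → ∀ a b, q a b ≤ p a b := by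
      rintro q ⟨hq0, hql, hqs, hqd⟩ a b
      rcases a with i | j
      · by_cases h : i ∈ B
        · rw [pval_v, hc]; dsimp only; rw [if_pos h, one_mul]
          exact hql _ _
        · have qcol : ∑ b', q b' (Sum.inl i) = 0 :=
            Finset.sum_eq_zero fun b' _ =>
              le_antisymm ((hql b' _).trans_eq (l_col_v b' i)) (hq0 b' _)
          have hd := hqd (Sum.inl i) ?_ b
          · simp only [hetV, qcol, sum_l_v, mul_zero, add_zero, if_neg h] at hd
            rw [hd, pval_v, hc]; dsimp only; rw [if_neg h]
            rw [div_le_iff₀ (by nlinarith [hx0 i])]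
            exact le_of_eq (by ring)
          · simp only [hetV, qcol, sum_l_v, add_zero]
            rw [if_neg h]
            nlinarith [hx0 i]
      · rw [pval_r]
        exact hql _ _
    have hliqp : liquidity p = (5 * α + 10) * S / 6 := by
      rw [liquidity, Fintype.sum_sum_type, Fin.sum_univ_three]
      have h1 : ∀ i : Fin k, ∑ b, p (Sum.inl i) b = c i * (2*(x i:ℝ)) := by
        intro i
        rw [Finset.sum_congr rfl fun b _ => pval_v i b, ← Finset.mul_sum, sum_l_v]
      have h2 : ∀ j : Fin 3, ∑ b, p (Sum.inr j) b = ∑ b, l (Sum.inr j) b := by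
        intro j; exact Finset.sum_congr rfl fun b _ => pval_r j b
      rw [Finset.sum_congr rfl fun i _ => h1 i, csum, h2, h2, h2, sum_l_S, sum_l_T, sum_l_L,
        ← Finset.mul_sum, ← Finset.mul_sum, hB, hB']
      ring
    exact ⟨t, ht0, htsum.le, p, ⟨hclear, hmax⟩, hliqp.ge⟩
  constructor
  · rintro ⟨t, ht0, htb, p, ⟨hpc, -⟩, hliq⟩
    exact conv ⟨t, ht0, htb, p, hpc, hliq⟩
  · rintro ⟨B, hB⟩
    exact fwd B hB
end

section
/- Fix default costs α, β ∈ [0,1] and a financial network without cash injections whose liability digraph {(i,j) : l_{ij} > 0} is either a directed tree (its underlying undirected graph is a tree/forest) or a single directed cycle. Then the strategy profile in which no bank removes any incoming edge is a pure Nash equilibrium of the edge-removal game. In particular, this holds because for every edge (i,j) of such a network there is no directed path from i to j other than the edge (i,j) itself, so bank j cannot benefit from removing the edge (i,j). -/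
open Finset

/-- Total assets of bank `i` under payments `p`. -/
def assets {ι : Type*} [Fintype ι] (e : ι → ℝ) (p : ι → ι → ℝ) (i : ι) : ℝ :=
  e i + ∑ j, p j i

/-- The underlying undirected (simple) graph of the liability digraph
`{(i,j) : l i j > 0}`. -/
def underlyingGraph {ι : Type*} (l : ι → ι → ℝ) : SimpleGraph ι where
  Adj a b := a ≠ b ∧ (0 < l a b ∨ 0 < l b a)
  symm := by
    constructor
    intro a b h
    exact ⟨h.1.symm, h.2.symm⟩
  loopless := by
    constructor
    intro a h
    exact h.1 rfl

/-!
Clearing matrices are the fixed points in `[0, l]` of a monotone map, and the maximal one is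
its greatest fixed point, so it dominates every post-fixed point. When bank `j` cuts its
incoming edges from `R`, let `M` be the set of banks reachable from the cut debtors of `j`
along liabilities avoiding `j`. If no debtor of `j` has a detour to `j`, then in the modified
network `M` owes nothing outside `M`, while outside `M` the liabilities are unchanged. Taking the
old payments on the rows and columns of `M` and the pointwise maximum of old and new payments
elsewhere gives a post-fixed point of the original clearing map, so `j` receives no more than
before. Forests and single cycles have no detours: in a forest the edge into `j` is a bridge,
and on a cycle every bank has a single creditor.
-/

section Clearing

variable {ι : Type*} [Fintype ι] {α β : ℝ} {e : ι → ℝ} {l l' p q P P' : ι → ι → ℝ}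

noncomputable def clearingMap (α β : ℝ) (e : ι → ℝ) (l p : ι → ι → ℝ) : ι → ι → ℝ :=
  fun i k => if ∑ y, l i y ≤ e i + ∑ x, p x i then l i k
    else (α * e i + β * ∑ x, p x i) * l i k / ∑ y, l i y

lemma IsClearing.clearingMap_eq (h : IsClearing α β e l p) : clearingMap α β e l p = p := by
  funext i k
  unfold clearingMap
  split_ifs with hsolv
  · exact (h.2.2.1 i hsolv k).symm
  · exact (h.2.2.2 i (not_le.mp hsolv) k).symm

lemma isClearing_of_clearingMap_eq (h0 : ∀ i k, 0 ≤ p i k) (hle : ∀ i k, p i k ≤ l i k)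
    (hfix : clearingMap α β e l p = p) : IsClearing α β e l p := by
  refine ⟨h0, hle, fun i hsolv k => ?_, fun i hdef k => ?_⟩
  · simpa [clearingMap, hsolv] using (congrFun₂ hfix i k).symm
  · simpa [clearingMap, not_le.mpr hdef] using (congrFun₂ hfix i k).symm

lemma recovery_le_of_default (hα₁ : α ≤ 1) (hβ₁ : β ≤ 1) {E A L : ℝ}
    (hE : 0 ≤ E) (hA : 0 ≤ A) (hdef : E + A < L) : α * E + β * A ≤ L := by
  nlinarith

lemma clearingMap_apply_le_of_inflow_le (hα₁ : α ≤ 1) (hβ₀ : 0 ≤ β) (hβ₁ : β ≤ 1)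
    (he : ∀ i, 0 ≤ e i) (hl : ∀ i k, 0 ≤ l i k) {i : ι} (hp : 0 ≤ ∑ x, p x i)
    (hpq : ∑ x, p x i ≤ ∑ x, q x i) (k : ι) :
    clearingMap α β e l p i k ≤ clearingMap α β e l q i k := by
  unfold clearingMap
  split_ifs with hp_solv hq_solv hq_solv
  · exact le_rfl
  · exact absurd (hp_solv.trans (by linarith)) hq_solv
  all_goals
    have hdef := not_le.mp hp_solv
    have hL : 0 < ∑ y, l i y := by linarith [he i]
    rw [div_le_iff₀ hL]
  · nlinarith [hl i k, recovery_le_of_default hα₁ hβ₁ (he i) hp hdef]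
  · rw [div_mul_cancel₀ _ hL.ne']
    exact mul_le_mul_of_nonneg_right (by nlinarith) (hl i k)

lemma clearingMap_apply_mem_Icc (hα₀ : 0 ≤ α) (hα₁ : α ≤ 1) (hβ₀ : 0 ≤ β) (hβ₁ : β ≤ 1)
    (he : ∀ i, 0 ≤ e i) (hl : ∀ i k, 0 ≤ l i k) {i : ι} (hp : 0 ≤ ∑ x, p x i) (k : ι) :
    clearingMap α β e l p i k ∈ Set.Icc 0 (l i k) := by
  unfold clearingMap
  split_ifs with hsolv
  · exact ⟨hl i k, le_rfl⟩
  · have hdef := not_le.mp hsolv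
    have hL : 0 < ∑ y, l i y := by linarith [he i]
    refine ⟨div_nonneg (mul_nonneg ?_ (hl i k)) hL.le, ?_⟩
    · exact add_nonneg (mul_nonneg hα₀ (he i)) (mul_nonneg hβ₀ hp)
    rw [div_le_iff₀ hL]
    nlinarith [hl i k, recovery_le_of_default hα₁ hβ₁ (he i) hp hdef]

/-- Knaster–Tarski: the maximal clearing matrix dominates the greatest fixed point of
`clearingMap` on `[0, l]`, hence every post-fixed point. -/
lemma IsMaxClearing.le_of_le_clearingMap (hα₀ : 0 ≤ α) (hα₁ : α ≤ 1) (hβ₀ : 0 ≤ β)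
    (hβ₁ : β ≤ 1) (he : ∀ i, 0 ≤ e i) (hl : ∀ i k, 0 ≤ l i k) (hP : IsMaxClearing α β e l P)
    (hq0 : ∀ i k, 0 ≤ q i k) (hql : ∀ i k, q i k ≤ l i k)
    (hq : ∀ i k, q i k ≤ clearingMap α β e l q i k) (i k : ι) : q i k ≤ P i k := by
  have : Fact ((0 : ι → ι → ℝ) ≤ l) := ⟨hl⟩
  have inflow_nonneg (p : Set.Icc (0 : ι → ι → ℝ) l) (i : ι) : 0 ≤ ∑ x, (p : ι → ι → ℝ) x i :=
    sum_nonneg fun x _ => p.2.1 x i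
  let F : Set.Icc (0 : ι → ι → ℝ) l →o Set.Icc (0 : ι → ι → ℝ) l :=
    { toFun := fun p => ⟨clearingMap α β e l p,
        fun i k => (clearingMap_apply_mem_Icc hα₀ hα₁ hβ₀ hβ₁ he hl (inflow_nonneg p i) k).1,
        fun i k => (clearingMap_apply_mem_Icc hα₀ hα₁ hβ₀ hβ₁ he hl (inflow_nonneg p i) k).2⟩
      monotone' := fun p p' hpp' i k => clearingMap_apply_le_of_inflow_le hα₁ hβ₀ hβ₁ he hl
        (inflow_nonneg p i) (sum_le_sum fun x _ => hpp' x i) k }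
  have hqF : (⟨q, hq0, hql⟩ : Set.Icc (0 : ι → ι → ℝ) l) ≤ F ⟨q, hq0, hql⟩ := hq
  have hgfp : IsClearing α β e l F.gfp :=
    isClearing_of_clearingMap_eq F.gfp.2.1 F.gfp.2.2 (congrArg Subtype.val F.map_gfp)
  exact (F.le_gfp hqF i k).trans (hP.2 _ hgfp i k)

lemma clearingMap_apply_congr_row {i : ι} (h : ∀ z, l' i z = l i z) (k : ι) :
    clearingMap α β e l' p i k = clearingMap α β e l p i k := by
  simp only [clearingMap, h]

lemma IsMaxClearing.le_of_sealed (hα₀ : 0 ≤ α) (hα₁ : α ≤ 1) (hβ₀ : 0 ≤ β) (hβ₁ : β ≤ 1)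
    (he : ∀ i, 0 ≤ e i) (hl : ∀ i k, 0 ≤ l i k) (hP : IsMaxClearing α β e l P)
    (hP' : IsClearing α β e l' P') {M : Set ι} (hrow : ∀ u ∉ M, ∀ z, l' u z = l u z)
    (hsealed : ∀ x ∈ M, ∀ u ∉ M, l' x u = 0) {u : ι} (hu : u ∉ M) (x : ι) :
    P' x u ≤ P x u := by
  classical
  -- `q` combines the payments of `l` and `l'` outside `M`; it is a post-fixed point of the
  -- clearing map of `l`, so it lies below `P`.
  set q : ι → ι → ℝ := fun a b => if a ∉ M ∧ b ∉ M then max (P a b) (P' a b) else P a b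
  have hPq (a b : ι) : P a b ≤ q a b := by
    simp only [q]
    split_ifs
    exacts [le_max_left _ _, le_rfl]
  have hP'q (v : ι) (hv : v ∉ M) (a : ι) : P' a v ≤ q a v := by
    by_cases ha : a ∈ M
    · calc P' a v ≤ l' a v := hP'.2.1 a v
        _ = 0 := hsealed a ha v hv
        _ ≤ P a v := hP.1.1 a v
        _ ≤ q a v := hPq a v
    · simp only [q, if_pos (And.intro ha hv), le_max_right]
  have hq0 (a b : ι) : 0 ≤ q a b := (hP.1.1 a b).trans (hPq a b)
  have hql (a b : ι) : q a b ≤ l a b := by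
    simp only [q]
    split_ifs with hab
    · exact max_le (hP.1.2.1 a b) ((hP'.2.1 a b).trans_eq (hrow a hab.1 b))
    · exact hP.1.2.1 a b
  have hP_le (i k : ι) : P i k ≤ clearingMap α β e l q i k := by
    rw [← congrFun₂ hP.1.clearingMap_eq i k]
    exact clearingMap_apply_le_of_inflow_le hα₁ hβ₀ hβ₁ he hl
      (sum_nonneg fun x _ => hP.1.1 x i) (sum_le_sum fun x _ => hPq x i) k
  have hqq (i k : ι) : q i k ≤ clearingMap α β e l q i k := by
    simp only [q]
    split_ifs with hik
    · refine max_le (hP_le i k) ?_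
      rw [← congrFun₂ hP'.clearingMap_eq i k, clearingMap_apply_congr_row (hrow i hik.1)]
      exact clearingMap_apply_le_of_inflow_le hα₁ hβ₀ hβ₁ he hl
        (sum_nonneg fun x _ => hP'.1 x i) (sum_le_sum fun x _ => hP'q i hik.1 x) k
    · exact hP_le i k
  calc P' x u ≤ q x u := hP'q u hu x
    _ ≤ P x u := hP.le_of_le_clearingMap hα₀ hα₁ hβ₀ hβ₁ he hl hq0 hql hqq x u

end Clearing

section Removal

variable {ι : Type*} {l : ι → ι → ℝ} {j : ι}

def removeIncoming [DecidableEq ι] (l : ι → ι → ℝ) (j : ι) (R : Finset ι) : ι → ι → ℝ :=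
  fun a b => if b = j ∧ a ∈ R then 0 else l a b

/-- Every directed path from a debtor `i` of `j` to `j` is the edge `(i, j)`: the last bank
before `j` on a path from `i` that avoids `j` until then is `i` itself. -/
def NoDetourInto (l : ι → ι → ℝ) (j : ι) : Prop :=
  ∀ i x, 0 < l i j → Relation.ReflTransGen (fun u v => 0 < l u v ∧ v ≠ j) i x → 0 < l x j →
    x = i

/-- The banks cut off from `j` by the removal (those reachable from a removed debtor of `j`
without passing through `j`) owe nothing outside themselves under the modified liabilities. -/
theorem IsMaxClearing.removeIncoming_le [Fintype ι] [DecidableEq ι] {α β : ℝ} {e : ι → ℝ}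
    {P P' : ι → ι → ℝ} (hα₀ : 0 ≤ α) (hα₁ : α ≤ 1) (hβ₀ : 0 ≤ β) (hβ₁ : β ≤ 1)
    (he : ∀ i, 0 ≤ e i) (hl : ∀ i k, 0 ≤ l i k) (hjj : l j j = 0) (hj : NoDetourInto l j)
    {R : Finset ι} (hP : IsMaxClearing α β e l P)
    (hP' : IsClearing α β e (removeIncoming l j R) P') (x : ι) : P' x j ≤ P x j := by
  let M : Set ι :=
    {x | ∃ a ∈ R, 0 < l a j ∧ Relation.ReflTransGen (fun u v => 0 < l u v ∧ v ≠ j) a x}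
  have hjM : j ∉ M := by
    rintro ⟨a, -, ha, haj⟩
    rcases haj.cases_tail with rfl | ⟨c, -, -, hne⟩
    · exact ha.ne' hjj
    · exact hne rfl
  refine hP.le_of_sealed hα₀ hα₁ hβ₀ hβ₁ he hl hP' (M := M) ?_ ?_ hjM x
  · intro u hu z
    simp only [removeIncoming]
    split_ifs with h
    · obtain ⟨rfl, huR⟩ := h
      by_contra hne
      exact hu ⟨u, huR, (hl u z).lt_of_ne hne, .refl⟩
    · rfl
  · rintro x ⟨a, haR, ha, hax⟩ u hu
    simp only [removeIncoming]
    split_ifs with h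
    · rfl
    by_contra hne
    have hpos : 0 < l x u := (hl x u).lt_of_ne' hne
    by_cases huj : u = j
    · subst huj
      exact h ⟨rfl, hj a x ha hax hpos ▸ haR⟩
    · exact hu ⟨a, haR, ha, hax.tail ⟨hpos, huj⟩⟩

end Removal

namespace SimpleGraph

variable {V : Type*} {G : SimpleGraph V} {j a x : V}

lemma exists_walk_of_reflTransGen_avoiding (haj : a ≠ j)
    (h : Relation.ReflTransGen (fun u v => G.Adj u v ∧ v ≠ j) a x) :
    ∃ w : G.Walk a x, j ∉ w.support := by
  induction h with
  | refl => exact ⟨.nil, by simpa using haj.symm⟩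
  | tail _ hbc ih =>
    obtain ⟨w, hw⟩ := ih
    exact ⟨w.concat hbc.1, by simp [Walk.support_concat, hw, hbc.2.symm]⟩

/-- The edge `j x` is a bridge, so the walk `j a … x` avoiding `j` after its start must use it
as its first edge. -/
lemma IsAcyclic.eq_of_adj_of_reflTransGen (hG : G.IsAcyclic) (ha : G.Adj j a) (hx : G.Adj j x)
    (h : Relation.ReflTransGen (fun u v => G.Adj u v ∧ v ≠ j) a x) : a = x := by
  obtain ⟨w, hw⟩ := exists_walk_of_reflTransGen_avoiding ha.ne' h
  have hmem := isBridge_iff_forall_walk_mem_edges.mp (isAcyclic_iff_forall_adj_isBridge.mp hG hx)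
    (w.cons ha)
  rw [Walk.edges_cons, List.mem_cons] at hmem
  rcases hmem with hedge | hedge
  · exact (Sym2.congr_right.mp hedge).symm
  · exact absurd (w.fst_mem_support_of_mem_edges hedge) hw

end SimpleGraph

lemma noDetourInto_of_isAcyclic {ι : Type*} {l : ι → ι → ℝ} (hdiag : ∀ i, l i i = 0)
    (hG : (underlyingGraph l).IsAcyclic) (j : ι) : NoDetourInto l j := by
  have adj {u v : ι} (h : 0 < l u v) : (underlyingGraph l).Adj v u :=
    ⟨fun hvu => by simp [hvu, hdiag] at h, Or.inr h⟩
  intro i x hi hix hx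
  exact (hG.eq_of_adj_of_reflTransGen (adj hi) (adj hx)
    (Relation.ReflTransGen.mono (fun u v h => ⟨(adj h.1).symm, h.2⟩) _ _ hix)).symm

lemma noDetourInto_of_creditor_unique {ι : Type*} {l : ι → ι → ℝ}
    (h : ∀ i a b, 0 < l i a → 0 < l i b → a = b) (j : ι) : NoDetourInto l j := by
  rintro i x hi hix -
  induction hix with
  | refl => rfl
  | tail _ hbc ih => exact absurd (h _ _ _ (ih ▸ hbc.1) hi) hbc.2

/-- In edge-removal games with default costs `α, β ∈ [0,1]` and without cash injections,
if the financial network is a directed tree (its underlying undirected graph is a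
tree/forest, i.e. acyclic) or a single directed cycle, then the profile in which no bank
removes any incoming edge is a pure Nash equilibrium: no bank `j` can strictly increase
its total assets by removing a subset `R` of its incoming edges. -/
theorem tree_or_cycle_no_removal_is_NE
    (ι : Type*) [Fintype ι] [DecidableEq ι]
    (α β : ℝ) (hα₀ : 0 ≤ α) (hα₁ : α ≤ 1) (hβ₀ : 0 ≤ β) (hβ₁ : β ≤ 1)
    (e : ι → ℝ) (he : ∀ i, 0 ≤ e i)
    (l : ι → ι → ℝ) (hl : ∀ i j, 0 ≤ l i j) (hdiag : ∀ i, l i i = 0)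
    (hstruct : (underlyingGraph l).IsAcyclic ∨
      ∃ σ : Equiv.Perm ι, σ.IsCycle ∧ σ.support = Finset.univ ∧
        ∀ i j, 0 < l i j ↔ j = σ i)
    (j : ι) (R : Finset ι)
    (P P' : ι → ι → ℝ)
    (hP : IsMaxClearing α β e l P)
    (hP' : IsMaxClearing α β e (fun a b => if b = j ∧ a ∈ R then 0 else l a b) P') :
    assets e P' j ≤ assets e P j := by
  have hj : NoDetourInto l j := by
    rcases hstruct with hG | ⟨σ, -, -, hσ⟩
    · exact noDetourInto_of_isAcyclic hdiag hG j
    · exact noDetourInto_of_creditor_unique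
        (fun i a b ha hb => ((hσ i a).1 ha).trans ((hσ i b).1 hb).symm) j
  have hinflow (x : ι) : P' x j ≤ P x j :=
    hP.removeIncoming_le hα₀ hα₁ hβ₀ hβ₁ he hl (hdiag j) hj hP'.1 x
  exact add_le_add_right (sum_le_sum fun x _ => hinflow x) (e j)
end
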